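/- Let s = (s_1 ≥ ... ≥ s_l) ∈ Z^l. An l-partition λ = (λ^{(1)},...,λ^{(l)}) is cylindrical (i.e., λ^{(k)}_{i + s_k - s_{k+1}} ≥ λ^{(k+1)}_i for all 1 ≤ k < l and i ≥ 1) if and only if its associated l-symbol S of charge s is standard, i.e., β_{k,j} ≥ β_{k+1,j} for all 1 ≤ k < l and all j ≤ s_{k+1}. -/
import Mathlib


open scoped BigOperators

/-- A partition: a weakly decreasing sequence of non-negative integers, eventually zero.
`part i` is the `(i+1)`-st part. -/
structure PartitionSeq where
  part : ℕ → ℕ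
  antitone : ∀ i j : ℕ, i ≤ j → part j ≤ part i
  eventually_zero : ∃ N : ℕ, ∀ i : ℕ, N ≤ i → part i = 0

/-- The Young diagram of an `l`-partition: boxes `(a, b, c)` with `a, b ≥ 1` and
`b ≤ λ^{(c)}_a`. -/
def YDiag {l : ℕ} (lam : Fin l → PartitionSeq) : Set (ℕ × ℕ × Fin l) :=
  {x | 1 ≤ x.1 ∧ 1 ≤ x.2.1 ∧ x.2.1 ≤ (lam x.2.2).part (x.1 - 1)}

/-- A box `γ` of `[λ]` is removable if `[λ] \ {γ}` is again the Young diagram of an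
`l`-partition. -/
def Removable {l : ℕ} (lam : Fin l → PartitionSeq) (γ : ℕ × ℕ × Fin l) : Prop :=
  γ ∈ YDiag lam ∧ ∃ mu : Fin l → PartitionSeq, YDiag mu = YDiag lam \ {γ}

/-- A box `γ ∉ [λ]` is addable if `[λ] ∪ {γ}` is again the Young diagram of an
`l`-partition. -/
def Addable {l : ℕ} (lam : Fin l → PartitionSeq) (γ : ℕ × ℕ × Fin l) : Prop :=
  γ ∉ YDiag lam ∧ ∃ mu : Fin l → PartitionSeq, YDiag mu = insert γ (YDiag lam)

/-- The charged content `b - a + s_c` of a box `(a, b, c)` relative to the charge `s`. -/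
def content {l : ℕ} (s : Fin l → ℤ) (γ : ℕ × ℕ × Fin l) : ℤ :=
  (γ.2.1 : ℤ) - (γ.1 : ℤ) + s γ.2.2
/-- An `l`-symbol of charge `s`: an `l`-tuple of strictly increasing integer sequences
`β_k = (β_{k,j})_{j ≤ s_k}` with `β_{k,j} = j` for `j ≪ 0`. -/
structure LSymbol (l : ℕ) (s : Fin l → ℤ) where
  β : (k : Fin l) → {j : ℤ // j ≤ s k} → ℤ
  strict : ∀ k : Fin l, StrictMono (β k)
  lower : ∀ k : Fin l, ∃ N : ℤ, ∀ j : {j : ℤ // j ≤ s k}, j.val ≤ N → β k j = j.val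

/-- for a weakly decreasing charge `s`, an `l`-partition `λ` is cylindrical
(`λ^{(k)}_{i + s_k - s_{k+1}} ≥ λ^{(k+1)}_i` for all `1 ≤ k < l`, `i ≥ 1`) if and only if
its `l`-symbol `S` of charge `s` is standard (`β_{k,j} ≥ β_{k+1,j}` for all `j ≤ s_{k+1}`). -/
theorem stmt18 (l : ℕ) (s : Fin l → ℤ) (hs : ∀ k k' : Fin l, k ≤ k' → s k' ≤ s k)
    (lam : Fin l → PartitionSeq) (S : LSymbol l s)
    (hrel : ∀ (k : Fin l) (i : ℕ),
      S.β k ⟨s k - (i : ℤ), by omega⟩ = ((lam k).part i : ℤ) + s k - (i : ℤ)) :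
    (∀ (k : Fin l) (hk : k.val + 1 < l) (i : ℕ),
        (lam ⟨k.val + 1, hk⟩).part i ≤
          (lam k).part (i + (s k - s ⟨k.val + 1, hk⟩).toNat)) ↔
      (∀ (k : Fin l) (hk : k.val + 1 < l) (j : ℤ) (hj : j ≤ s ⟨k.val + 1, hk⟩),
        S.β ⟨k.val + 1, hk⟩ ⟨j, hj⟩ ≤
          S.β k ⟨j, le_trans hj (hs k ⟨k.val + 1, hk⟩ (by simp [Fin.le_def]))⟩) := by
  have key : ∀ (k : Fin l) (j : ℤ) (hj : j ≤ s k),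
      S.β k ⟨j, hj⟩ = ((lam k).part (s k - j).toNat : ℤ) + j := by
    intro k j hj
    have h1 : (s k - (((s k - j).toNat : ℕ) : ℤ)) = j := by omega
    have h2 : (⟨j, hj⟩ : {j : ℤ // j ≤ s k}) =
        ⟨s k - (((s k - j).toNat : ℕ) : ℤ), by omega⟩ := Subtype.ext h1.symm
    rw [h2, hrel k (s k - j).toNat]
    omega
  constructor
  · intro h k hk j hj
    have hss : s ⟨k.val + 1, hk⟩ ≤ s k := hs k ⟨k.val + 1, hk⟩ (by simp [Fin.le_def])
    rw [key, key]
    have hi : (s k - j).toNat = (s ⟨k.val + 1, hk⟩ - j).toNat + (s k - s ⟨k.val + 1, hk⟩).toNat := by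
      omega
    have := h k hk (s ⟨k.val + 1, hk⟩ - j).toNat
    rw [hi]
    omega
  · intro h k hk i
    have hss : s ⟨k.val + 1, hk⟩ ≤ s k := hs k ⟨k.val + 1, hk⟩ (by simp [Fin.le_def])
    have hj : (s ⟨k.val + 1, hk⟩ - (i : ℤ)) ≤ s ⟨k.val + 1, hk⟩ := by omega
    have := h k hk _ hj
    rw [key, key] at this
    have e1 : (s ⟨k.val + 1, hk⟩ - (s ⟨k.val + 1, hk⟩ - (i : ℤ))).toNat = i := by omega
    have e2 : (s k - (s ⟨k.val + 1, hk⟩ - (i : ℤ))).toNat = i + (s k - s ⟨k.val + 1, hk⟩).toNat := by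
      omega
    rw [e1, e2] at this
    omega
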